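/- Under event ℰ', the size of the assignable user set satisfies (1−r)τ − 7r^{-1}·α^{1/3}·τ ≤ |P̂| ≤ (1−r)τ + α^{1/3}·τ. -/

import Mathlib

/-!
The condition `c i < v i` is downward closed, so `P_o = range τ`. The canonical matching of the
sorted samples pairs users and slots index by index; a pair below `τ` on both sides is matched and
a matched pair has a side below `τ`, so its size `s` lies between `#(P_o ∩ PT)` and `#(P_o ∩ BT)`,
whence `|s - rτ| ≤ ετ` with `ε = α^{1/3}`. Since `P̂ = range p̂ \ PT`, we have
`|P̂| = p̂ - #(range p̂ ∩ PT)`, and `p̂` is located through its rank `L ≈ (1 - 2ε/r) s` in `PT`: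
`L ≤ #(P_o ∩ PT)` gives `p̂ < τ`, hence the upper bound, and `#(range k ∩ PT) < L` gives `k ≤ p̂`,
hence the lower bound `|P̂| ≥ k - #(range k ∩ PT) ≥ (1 - r)k - ετ`.
-/

open Finset

/-- Size of the canonical assignment restricted to users `PT` and slots `BT`
(indices sorted increasingly = increasing cost / decreasing value order). -/
noncomputable def canonSize (c v : ℕ → ℝ) (PT BT : Finset ℕ) : ℕ :=
  (List.zip ((PT.sort (· ≤ ·)).map c) ((BT.sort (· ≤ ·)).map v)).countP
    (fun x => decide (x.1 < x.2))

namespace List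

variable {α β : Type*} {p : α → Bool} {q : β → Bool} {R : α → β → Bool}

theorem countP_eq_zero_of_pairwise_of_not {a : α} {l : List α}
    (hl : (a :: l).Pairwise (fun x y => p y → p x)) (ha : ¬p a) : (a :: l).countP p = 0 :=
  countP_eq_zero.mpr fun x hx hpx => by
    rcases mem_cons.mp hx with rfl | hx
    · exact ha hpx
    · exact ha ((pairwise_cons.mp hl).1 x hx hpx)

theorem min_countP_le_countP_zip :
    ∀ {l₁ : List α} {l₂ : List β}, l₁.Pairwise (fun x y => p y → p x) →
      l₂.Pairwise (fun x y => q y → q x) →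
      (∀ x ∈ l₁, ∀ y ∈ l₂, p x → q y → R x y) →
      min (l₁.countP p) (l₂.countP q) ≤ (l₁.zip l₂).countP (fun z => R z.1 z.2)
  | [], _, _, _, _ => by simp
  | _ :: _, [], _, _, _ => by simp
  | x :: l₁, y :: l₂, h₁, h₂, hR => by
    by_cases hx : p x
    · by_cases hy : q y
      · have ih := min_countP_le_countP_zip (pairwise_cons.mp h₁).2 (pairwise_cons.mp h₂).2
          fun a ha b hb => hR a (mem_cons_of_mem _ ha) b (mem_cons_of_mem _ hb)
        simp only [zip_cons_cons, countP_cons, hx, hy, hR x mem_cons_self y mem_cons_self hx hy]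
        omega
      · simp [countP_eq_zero_of_pairwise_of_not h₂ hy]
    · simp [countP_eq_zero_of_pairwise_of_not h₁ hx]

theorem countP_zip_le_max_countP :
    ∀ {l₁ : List α} {l₂ : List β}, l₁.Pairwise (fun x y => p y → p x) →
      l₂.Pairwise (fun x y => q y → q x) →
      (∀ x ∈ l₁, ∀ y ∈ l₂, R x y → p x ∨ q y) →
      (l₁.zip l₂).countP (fun z => R z.1 z.2) ≤ max (l₁.countP p) (l₂.countP q)
  | [], _, _, _, _ => by simp
  | _ :: _, [], _, _, _ => by simp
  | x :: l₁, y :: l₂, h₁, h₂, hR => by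
    have ih := countP_zip_le_max_countP (pairwise_cons.mp h₁).2 (pairwise_cons.mp h₂).2
      fun a ha b hb => hR a (mem_cons_of_mem _ ha) b (mem_cons_of_mem _ hb)
    have hxy := hR x mem_cons_self y mem_cons_self
    have h₁0 := countP_eq_zero_of_pairwise_of_not h₁
    have h₂0 := countP_eq_zero_of_pairwise_of_not h₂
    simp only [zip_cons_cons, countP_cons] at h₁0 h₂0 ⊢
    -- if `p x` fails then `p` fails along `x :: l₁`, so `R x y` forces `q y`; symmetrically
    split_ifs at h₁0 h₂0 ⊢ <;> grind

end List

theorem Finset.countP_sort {α : Type*} (s : Finset α) (r : α → α → Prop) [DecidableRel r]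
    [IsTrans α r] [Std.Antisymm r] [Std.Total r] (p : α → Prop) [DecidablePred p] :
    (s.sort r).countP (fun x => decide (p x)) = #(s.filter p) := by
  rw [← Multiset.coe_countP, Finset.sort_eq, Multiset.countP_eq_card_filter]
  rfl

theorem Finset.countP_sort_lt_eq_card_range_inter (S : Finset ℕ) (τ : ℕ) :
    (S.sort (· ≤ ·)).countP (fun x => decide (x < τ)) = #(range τ ∩ S) := by
  rw [Finset.countP_sort]
  congr 1
  ext x
  simp [and_comm]

theorem Finset.pairwise_sort_lt_imp_lt (S : Finset ℕ) (τ : ℕ) :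
    (S.sort (· ≤ ·)).Pairwise (fun x y => decide (y < τ) → decide (x < τ)) :=
  (pairwise_sort S _).imp fun hxy hy => by simp only [decide_eq_true_eq] at hy ⊢; omega

theorem Finset.eq_range_card_of_isLowerSet {S : Finset ℕ} (hS : IsLowerSet (S : Set ℕ)) :
    S = range #S := by
  ext i
  rw [mem_range]
  constructor
  · intro hi
    have : range (i + 1) ⊆ S := fun j hj => hS (Nat.lt_succ_iff.mp (mem_range.mp hj)) hi
    simpa using card_le_card this
  · intro hi
    by_contra hiS
    have : S ⊆ range i := fun j hj => mem_range.mpr (lt_of_not_ge fun hij => hiS (hS hij hj))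
    simpa using hi.trans_le (card_le_card this)

theorem Finset.lt_iff_card_filter_le_card_range_inter {S : Finset ℕ} {p t : ℕ} (hp : p ∈ S) :
    p < t ↔ #(S.filter (· ≤ p)) ≤ #(range t ∩ S) := by
  constructor
  · intro hpt
    refine card_le_card fun q hq => ?_
    rw [mem_filter] at hq
    exact mem_inter.mpr ⟨mem_range.mpr (hq.2.trans_lt hpt), hq.1⟩
  · intro h
    by_contra! htp
    refine (card_lt_card ⟨fun q hq => ?_, fun hsub => ?_⟩).not_ge h
    · rw [mem_inter, mem_range] at hq
      exact mem_filter.mpr ⟨hq.2, hq.1.le.trans htp⟩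
    · have := mem_range.mp (mem_inter.mp (hsub (mem_filter.mpr ⟨hp, le_rfl⟩))).1
      omega

theorem Finset.card_range_sdiff_add_card_range_inter_le {S : Finset ℕ} {p t : ℕ} (hp : p ∈ S)
    (h : #(S.filter (· ≤ p)) ≤ #(range t ∩ S)) : #(range p \ S) + #(range t ∩ S) ≤ t := by
  have hpt := (lt_iff_card_filter_le_card_range_inter hp).mpr h
  calc #(range p \ S) + #(range t ∩ S) ≤ #(range t \ S) + #(range t ∩ S) := by
        gcongr
    _ = t := by rw [card_sdiff_add_card_inter, card_range]

theorem Finset.le_card_range_sdiff_add_card_range_inter {S : Finset ℕ} {p t : ℕ} (hp : p ∈ S)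
    (h : #(range t ∩ S) < #(S.filter (· ≤ p))) : t ≤ #(range p \ S) + #(range t ∩ S) := by
  have htp := not_lt.mp fun hpt => h.not_ge ((lt_iff_card_filter_le_card_range_inter hp).mp hpt)
  calc t = #(range t \ S) + #(range t ∩ S) := by rw [card_sdiff_add_card_inter, card_range]
    _ ≤ #(range p \ S) + #(range t ∩ S) := by gcongr

theorem canonSize_eq_countP_zip (c v : ℕ → ℝ) (PT BT : Finset ℕ) :
    canonSize c v PT BT = ((PT.sort (· ≤ ·)).zip (BT.sort (· ≤ ·))).countP
      (fun z => decide (c z.1 < v z.2)) := by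
  rw [canonSize, List.zip_map, List.countP_map]
  rfl

section CanonSize

variable {c v : ℕ → ℝ} {PT BT : Finset ℕ} {τ : ℕ}

theorem min_card_le_canonSize (h : ∀ x y, x < τ → y < τ → c x < v y) :
    min #(range τ ∩ PT) #(range τ ∩ BT) ≤ canonSize c v PT BT := by
  rw [canonSize_eq_countP_zip, ← countP_sort_lt_eq_card_range_inter,
    ← countP_sort_lt_eq_card_range_inter]
  exact List.min_countP_le_countP_zip (R := fun x y => decide (c x < v y))
    (pairwise_sort_lt_imp_lt PT τ) (pairwise_sort_lt_imp_lt BT τ)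
    fun x _ y _ hx hy => by simpa using h x y (by simpa using hx) (by simpa using hy)

theorem canonSize_le_max_card (h : ∀ x ∈ PT, ∀ y ∈ BT, c x < v y → x < τ ∨ y < τ) :
    canonSize c v PT BT ≤ max #(range τ ∩ PT) #(range τ ∩ BT) := by
  rw [canonSize_eq_countP_zip, ← countP_sort_lt_eq_card_range_inter,
    ← countP_sort_lt_eq_card_range_inter]
  exact List.countP_zip_le_max_countP (R := fun x y => decide (c x < v y))
    (pairwise_sort_lt_imp_lt PT τ) (pairwise_sort_lt_imp_lt BT τ)
    fun x hx y hy hxy => by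
      simpa using h x ((mem_sort _).mp hx) y ((mem_sort _).mp hy) (by simpa using hxy)

end CanonSize

section Market

variable {c v : ℕ → ℝ} {n m τ : ℕ}

theorem filter_cost_lt_value_eq_range (hc : Monotone c) (hv : Antitone v) (N : ℕ) :
    (range N).filter (fun i => c i < v i) = range #((range N).filter fun i => c i < v i) :=
  eq_range_card_of_isLowerSet fun i j hji hi => by
    simp only [mem_coe, mem_filter, mem_range] at hi ⊢
    exact ⟨hji.trans_lt hi.1, (hc hji).trans_lt (hi.2.trans_le (hv hji))⟩

theorem cost_lt_value_of_lt (hc : Monotone c) (hv : Antitone v)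
    (hτ : (range (min n m)).filter (fun i => c i < v i) = range τ) {x y : ℕ}
    (hx : x < τ) (hy : y < τ) : c x < v y := by
  have : max x y ∈ (range (min n m)).filter (fun i => c i < v i) :=
    hτ ▸ mem_range.mpr (max_lt hx hy)
  exact (hc (le_max_left x y)).trans_lt ((mem_filter.mp this).2.trans_le (hv (le_max_right x y)))

theorem lt_or_lt_of_cost_lt_value (hc : Monotone c) (hv : Antitone v)
    (hτ : (range (min n m)).filter (fun i => c i < v i) = range τ) {x y : ℕ}
    (hx : x < n) (hy : y < m) (hxy : c x < v y) : x < τ ∨ y < τ := by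
  by_contra! h
  have : min x y ∉ (range (min n m)).filter (fun i => c i < v i) := by
    rw [hτ, mem_range]; omega
  exact this (mem_filter.mpr ⟨mem_range.mpr (by omega),
    (hc (min_le_left x y)).trans_lt (hxy.trans_le (hv (min_le_right x y)))⟩)

theorem abs_canonSize_sub_le {PT BT : Finset ℕ} (hc : Monotone c) (hv : Antitone v)
    (hτ : (range (min n m)).filter (fun i => c i < v i) = range τ)
    (hPT : PT ⊆ range n) (hBT : BT ⊆ range m) {x e : ℝ}
    (hP : |(#(range τ ∩ PT) : ℝ) - x| ≤ e) (hB : |(#(range τ ∩ BT) : ℝ) - x| ≤ e) :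
    |(canonSize c v PT BT : ℝ) - x| ≤ e := by
  have hmin : (min #(range τ ∩ PT) #(range τ ∩ BT) : ℝ) ≤ canonSize c v PT BT := by
    exact_mod_cast min_card_le_canonSize fun _ _ => cost_lt_value_of_lt hc hv hτ
  have hmax : (canonSize c v PT BT : ℝ) ≤ max (#(range τ ∩ PT) : ℝ) #(range τ ∩ BT) := by
    exact_mod_cast canonSize_le_max_card fun a ha b hb =>
      lt_or_lt_of_cost_lt_value hc hv hτ (mem_range.mp (hPT ha)) (mem_range.mp (hBT hb))
  rw [abs_le] at hP hB ⊢
  have hlo : x - e ≤ canonSize c v PT BT := le_trans (le_min (by linarith) (by linarith)) hmin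
  have hhi : (canonSize c v PT BT : ℝ) ≤ x + e :=
    le_trans hmax (max_le (by linarith) (by linarith))
  constructor <;> linarith

theorem filter_notMem_cost_lt_eq_range_sdiff (hc : StrictMono c) (S : Finset ℕ) {p : ℕ}
    (hp : p < n) : (range n).filter (fun q => q ∉ S ∧ c q < c p) = range p \ S := by
  ext q
  simp only [mem_filter, mem_range, mem_sdiff, hc.lt_iff_lt]
  constructor
  · exact fun h => ⟨h.2.2, h.2.1⟩
  · exact fun h => ⟨h.1.trans hp, h.2, h.1⟩

end Market

theorem one_le_rpow_mul_of_one_div_le {α τ y : ℝ} (hτ : 1 ≤ τ) (hα : 1 / τ ≤ α) (hy₀ : 0 ≤ y)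
    (hy₁ : y ≤ 1) : 1 ≤ α ^ y * τ := by
  have hτ₀ : 0 < τ := by linarith
  have h : 1 / τ ≤ α ^ y :=
    calc 1 / τ ≤ (1 / τ) ^ y :=
          Real.self_le_rpow_of_le_one (by positivity) ((div_le_one hτ₀).mpr hτ) hy₁
      _ ≤ α ^ y := by gcongr
  rwa [div_le_iff₀ hτ₀] at h

theorem one_sub_two_inv_mul_mul_le {r ε τ s A : ℝ} (hr : 0 < r) (hε : 0 ≤ ε) (hτ : 0 ≤ τ)
    (hs₀ : 0 ≤ s) (hA₀ : 0 ≤ A) (hs : s ≤ r * τ + ε * τ) (hA : r * τ - ε * τ ≤ A) :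
    (1 - 2 * r⁻¹ * ε) * s ≤ A := by
  -- with `ε = r ρ` the inequalities of this kind become polynomial in `r, ρ, τ`
  obtain ⟨ρ, hρ, rfl⟩ : ∃ ρ, 0 ≤ ρ ∧ ε = r * ρ := ⟨r⁻¹ * ε, by positivity, by field_simp⟩
  have hρ' : r⁻¹ * (r * ρ) = ρ := by field_simp
  rw [mul_assoc, hρ']
  rcases le_or_gt (1 - 2 * ρ) 0 with hneg | hpos
  · nlinarith
  · nlinarith [mul_le_mul_of_nonneg_left hs hpos.le,
      mul_nonneg (mul_nonneg hr.le hτ) (mul_nonneg hρ hρ)]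

theorem lt_one_sub_two_inv_mul_mul {r ε τ s k C : ℝ} (hr : 0 < r) (hε : 0 ≤ ε)
    (hετ : 1 ≤ ε * τ) (hsmall : 7 * r⁻¹ * ε < 1 - r) (hk : k < (1 - 6 * r⁻¹ * ε) * τ + 1)
    (hC : C ≤ r * k + ε * τ) (hs : r * τ - ε * τ ≤ s) :
    C < (1 - 2 * r⁻¹ * ε) * s := by
  obtain ⟨ρ, hρ, rfl⟩ : ∃ ρ, 0 ≤ ρ ∧ ε = r * ρ := ⟨r⁻¹ * ε, by positivity, by field_simp⟩
  have hρ' : r⁻¹ * (r * ρ) = ρ := by field_simp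
  simp only [mul_assoc, hρ'] at hsmall hk ⊢
  have hτ : 0 ≤ τ := by nlinarith
  nlinarith [mul_le_mul_of_nonneg_left hs (by linarith : (0:ℝ) ≤ 1 - 2 * ρ),
    mul_lt_mul_of_pos_left hk hr, mul_nonneg (mul_nonneg hr.le hτ) (mul_nonneg hρ hρ)]

theorem sub_seven_inv_mul_mul_le {r ε τ k : ℝ} (hr : 0 < r) (hr1 : r ≤ 1) (hε : 0 ≤ ε)
    (hτ : 0 ≤ τ) (hk : (1 - 6 * r⁻¹ * ε) * τ ≤ k) :
    (1 - r) * τ - 7 * r⁻¹ * ε * τ ≤ k - (r * k + ε * τ) := by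
  obtain ⟨ρ, hρ, rfl⟩ : ∃ ρ, 0 ≤ ρ ∧ ε = r * ρ := ⟨r⁻¹ * ε, by positivity, by field_simp⟩
  have hρ' : r⁻¹ * (r * ρ) = ρ := by field_simp
  simp only [mul_assoc, hρ'] at hk ⊢
  nlinarith [mul_le_mul_of_nonneg_left hk (by linarith : (0:ℝ) ≤ 1 - r), mul_nonneg hρ hτ,
    mul_nonneg (mul_nonneg hr.le hρ) hτ]

section Rank

variable {S : Finset ℕ} {p t : ℕ} {r ε s : ℝ}

theorem card_range_sdiff_le_of_card_filter_eq_ceil (hr : 0 < r) (hε : 0 ≤ ε) (hp : p ∈ S)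
    (hrank : #(S.filter (· ≤ p)) = ⌈(1 - 2 * r⁻¹ * ε) * s⌉₊) (hs₀ : 0 ≤ s)
    (hs : s ≤ r * t + ε * t) (hS : |(#(range t ∩ S) : ℝ) - r * t| ≤ ε * t) :
    (#(range p \ S) : ℝ) ≤ (1 - r) * t + ε * t := by
  obtain ⟨hS_lo, -⟩ := abs_le.mp hS
  have hrank_le : #(S.filter (· ≤ p)) ≤ #(range t ∩ S) := by
    rw [hrank, Nat.ceil_le]
    exact one_sub_two_inv_mul_mul_le hr hε (Nat.cast_nonneg t) hs₀ (Nat.cast_nonneg _) hs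
      (by linarith)
  have hsplit : (#(range p \ S) : ℝ) + #(range t ∩ S) ≤ t := by
    exact_mod_cast card_range_sdiff_add_card_range_inter_le hp hrank_le
  linarith

theorem le_card_range_sdiff_of_card_filter_eq_ceil {k : ℕ} (hr : 0 < r) (hε : 0 ≤ ε)
    (hεt : 1 ≤ ε * t) (hp : p ∈ S) (hrank : #(S.filter (· ≤ p)) = ⌈(1 - 2 * r⁻¹ * ε) * s⌉₊)
    (hs : r * t - ε * t ≤ s) (hk : k = ⌈(1 - 6 * r⁻¹ * ε) * t⌉₊)
    (hS : |(#(range k ∩ S) : ℝ) - r * k| ≤ ε * t) :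
    (1 - r) * t - 7 * r⁻¹ * ε * t ≤ #(range p \ S) := by
  rcases le_or_gt ((1 - r) * t - 7 * r⁻¹ * ε * t) 0 with htriv | hnontriv
  · exact htriv.trans (Nat.cast_nonneg _)
  obtain ⟨-, hS_hi⟩ := abs_le.mp hS
  have hρ : 0 ≤ r⁻¹ * ε := mul_nonneg (inv_nonneg.mpr hr.le) hε
  have hsmall : 7 * r⁻¹ * ε < 1 - r := by nlinarith
  have hk_lo : (1 - 6 * r⁻¹ * ε) * t ≤ k := by rw [hk]; exact Nat.le_ceil _
  have hk_hi : (k : ℝ) < (1 - 6 * r⁻¹ * ε) * t + 1 := by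
    rw [hk]; exact Nat.ceil_lt_add_one (by nlinarith)
  have hrank_lt : #(range k ∩ S) < #(S.filter (· ≤ p)) := by
    rw [hrank, Nat.lt_ceil]
    exact lt_one_sub_two_inv_mul_mul hr hε hεt hsmall hk_hi (by linarith) hs
  have hsplit : (k : ℝ) ≤ #(range p \ S) + #(range k ∩ S) := by
    exact_mod_cast le_card_range_sdiff_add_card_range_inter hp hrank_lt
  linarith [sub_seven_inv_mul_mul_le hr (by linarith) hε (Nat.cast_nonneg t) hk_lo]

end Rank

theorem stmt_13_general (n m : ℕ) (c v : ℕ → ℝ)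
    (hc : StrictMono c) (hv : StrictAnti v)
    (PT BT : Finset ℕ) (hPT : PT ⊆ Finset.range n) (hBT : BT ⊆ Finset.range m)
    (r α : ℝ) (hr : 0 < r)
    (Po : Finset ℕ)
    (hPo : Po = (Finset.range (min n m)).filter (fun i => c i < v i))
    (τ : ℕ) (hτ : τ = Po.card) (hτpos : 0 < τ)
    (hα : 1 / (τ : ℝ) ≤ α)
    (s : ℕ) (hs : s = canonSize c v PT BT)
    (L : ℕ) (hL : L = ⌈(1 - 2 * r⁻¹ * α ^ ((1 : ℝ) / 3)) * (s : ℝ)⌉₊)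
    (phat : ℕ) (hphat₁ : phat ∈ PT)
    (hphat₂ : (PT.filter (fun q => q ≤ phat)).card = L)
    (k : ℕ) (hk : k = ⌈(1 - 6 * r⁻¹ * α ^ ((1 : ℝ) / 3)) * (τ : ℝ)⌉₊)
    (hE1 : |((Po ∩ PT).card : ℝ) - r * τ| ≤ α ^ ((1 : ℝ) / 3) * τ)
    (hE2 : |((Po ∩ BT).card : ℝ) - r * τ| ≤ α ^ ((1 : ℝ) / 3) * τ)
    (hE3 : |((Finset.range k ∩ PT).card : ℝ) - r * k| ≤ α ^ ((1 : ℝ) / 3) * τ)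
    (Phat : Finset ℕ)
    (hPhat : Phat = (Finset.range n).filter (fun p => p ∉ PT ∧ c p < c phat)) :
    (1 - r) * τ - 7 * r⁻¹ * α ^ ((1 : ℝ) / 3) * τ ≤ (Phat.card : ℝ) ∧
      (Phat.card : ℝ) ≤ (1 - r) * τ + α ^ ((1 : ℝ) / 3) * τ := by
  set ε := α ^ ((1 : ℝ) / 3)
  have hτ₁ : (1 : ℝ) ≤ τ := by exact_mod_cast hτpos
  have hε : 0 ≤ ε := Real.rpow_nonneg ((one_div_pos.mpr (by positivity)).le.trans hα) _
  have hετ : 1 ≤ ε * τ := one_le_rpow_mul_of_one_div_le hτ₁ hα (by norm_num) (by norm_num)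
  have hPo_range : Po = range τ :=
    hτ ▸ hPo ▸ filter_cost_lt_value_eq_range hc.monotone hv.antitone _
  rw [hPo_range] at hE1 hE2
  obtain ⟨hs_lo, hs_hi⟩ := abs_le.mp <| hs ▸
    abs_canonSize_sub_le hc.monotone hv.antitone (hPo_range ▸ hPo).symm hPT hBT hE1 hE2
  rw [hL] at hphat₂
  rw [hPhat, filter_notMem_cost_lt_eq_range_sdiff hc PT (mem_range.mp (hPT hphat₁))]
  exact ⟨le_card_range_sdiff_of_card_filter_eq_ceil hr hε hετ hphat₁ hphat₂ (by linarith) hk hE3,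
    card_range_sdiff_le_of_card_filter_eq_ceil hr hε hphat₁ hphat₂ (Nat.cast_nonneg s)
      (by linarith) hE1⟩

/-- Under event `ℰ'`, the size of the assignable user set
`P̂ = {p ∈ P(M∖M_T) : c p < c p̂}` satisfies
`(1−r)τ − 7r⁻¹·α^{1/3}·τ ≤ |P̂| ≤ (1−r)τ + α^{1/3}·τ`. -/
theorem stmt_13 (n m : ℕ) (c v : ℕ → ℝ)
    (hc : StrictMono c) (hv : StrictAnti v)
    (hcv : ∀ i j : ℕ, c i ≠ v j)
    (PT BT : Finset ℕ) (hPT : PT ⊆ Finset.range n) (hBT : BT ⊆ Finset.range m)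
    (r α : ℝ) (hr : 0 < r) (hr2 : r ≤ 1 / 2)
    (Po : Finset ℕ)
    (hPo : Po = (Finset.range (min n m)).filter (fun i => c i < v i))
    (τ : ℕ) (hτ : τ = Po.card) (hτpos : 0 < τ)
    (hα : 1 / (τ : ℝ) ≤ α) (hα1 : α ≤ 1)
    (s : ℕ) (hs : s = canonSize c v PT BT)
    (L : ℕ) (hL : L = ⌈(1 - 2 * r⁻¹ * α ^ ((1 : ℝ) / 3)) * (s : ℝ)⌉₊)
    (hLpos : 0 < L)
    (phat : ℕ) (hphat₁ : phat ∈ PT)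
    (hphat₂ : (PT.filter (fun q => q ≤ phat)).card = L)
    (k : ℕ) (hk : k = ⌈(1 - 6 * r⁻¹ * α ^ ((1 : ℝ) / 3)) * (τ : ℝ)⌉₊)
    (hE1 : |((Po ∩ PT).card : ℝ) - r * τ| ≤ α ^ ((1 : ℝ) / 3) * τ)
    (hE2 : |((Po ∩ BT).card : ℝ) - r * τ| ≤ α ^ ((1 : ℝ) / 3) * τ)
    (hE3 : |((Finset.range k ∩ PT).card : ℝ) - r * k| ≤ α ^ ((1 : ℝ) / 3) * τ)
    (hE4 : |((Finset.range k ∩ BT).card : ℝ) - r * k| ≤ α ^ ((1 : ℝ) / 3) * τ)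
    (Phat : Finset ℕ)
    (hPhat : Phat = (Finset.range n).filter (fun p => p ∉ PT ∧ c p < c phat)) :
    (1 - r) * τ - 7 * r⁻¹ * α ^ ((1 : ℝ) / 3) * τ ≤ (Phat.card : ℝ) ∧
      (Phat.card : ℝ) ≤ (1 - r) * τ + α ^ ((1 : ℝ) / 3) * τ :=
  stmt_13_general n m c v hc hv PT BT hPT hBT r α hr Po hPo τ hτ hτpos hα s hs L hL phat hphat₁
    hphat₂ k hk hE1 hE2 hE3 Phat hPhat
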